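/- arXiv:1810.11829 — 3 statements merged into one kernel-verified Lean document; each statement's English description precedes it below -/
import Mathlib

section
/- Let d ≥ 1 be a natural number (number of experts), T a natural number, and let ℓ : Fin T → Fin d → [0,1] be a loss sequence. Define weights w_f^t = (1−η)^(∑_{s<t} ℓ_s(f)) and probabilities p_f^t = w_f^t / ∑_j w_j^t, with 0 < η < 1/2. Then for every expert f, the algorithm's total expected loss L̂ = ∑_t ∑_j p_j^t ℓ_t(j) satisfies L̂ ≤ (1+η)·(∑_t ℓ_t(f)) + ln(d)/η. -/
open Finset

lemma chord_rpow (a x : ℝ) (ha : 0 < a) (hx0 : 0 ≤ x) (hx1 : x ≤ 1) :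
    a ^ x ≤ 1 - (1 - a) * x := by
  have h := convexOn_exp.2 (Set.mem_univ (0:ℝ)) (Set.mem_univ (Real.log a))
    (by linarith : (0:ℝ) ≤ 1 - x) hx0 (by ring)
  simp only [smul_eq_mul, mul_zero, zero_add, Real.exp_zero, mul_one, Real.exp_log ha] at h
  rw [Real.rpow_def_of_pos ha]
  calc Real.exp (Real.log a * x) = Real.exp (x * Real.log a) := by rw [mul_comm]
    _ ≤ (1-x) + x * a := h
    _ = 1 - (1-a)*x := by ring

lemma neg_log_one_sub_le (η : ℝ) (h0 : 0 < η) (h2 : η < 1/2) :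
    -Real.log (1 - η) ≤ η + η^2 := by
  have h1 : (0:ℝ) < 1 - η := by linarith
  have hq : 1 + (η+η^2) + (η+η^2)^2/2 ≤ Real.exp (η+η^2) :=
    Real.quadratic_le_exp_of_nonneg (by positivity)
  have h3 : 1 / (1-η) ≤ Real.exp (η+η^2) := by
    rw [div_le_iff₀ h1]
    nlinarith
  have h4 := Real.log_le_log (by positivity) h3
  rw [Real.log_div one_ne_zero (ne_of_gt h1), Real.log_one, Real.log_exp] at h4
  linarith

theorem stmt6 (d T : ℕ) (hd : 1 ≤ d) (η : ℝ) (hη : 0 < η) (hη2 : η < 1/2)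
    (ℓ : Fin T → Fin d → ℝ) (hℓ : ∀ t f, ℓ t f ∈ Set.Icc (0 : ℝ) 1)
    (w : Fin T → Fin d → ℝ)
    (hw : ∀ t f, w t f = (1 - η) ^ (∑ s ∈ Finset.univ.filter (fun s => s < t), ℓ s f))
    (p : Fin T → Fin d → ℝ) (hp : ∀ t f, p t f = w t f / ∑ j, w t j)
    (f : Fin d) :
    ∑ t, ∑ j, p t j * ℓ t j ≤ (1 + η) * (∑ t, ℓ t f) + Real.log d / η := by
  have h1 : (0:ℝ) < 1 - η := by linarith
  set q : Fin T → ℝ := fun t => ∑ j, p t j * ℓ t j with hqdef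
  set S : ℕ → Fin d → ℝ := fun k j =>
    ∑ s ∈ Finset.univ.filter (fun s : Fin T => (s:ℕ) < k), ℓ s j with hSdef
  set Φ : ℕ → ℝ := fun k => ∑ j, (1 - η) ^ (S k j) with hΦdef
  set Q : ℕ → ℝ := fun k => ∑ s ∈ Finset.univ.filter (fun s : Fin T => (s:ℕ) < k), q s with hQdef
  have hwS : ∀ (t : Fin T) (j : Fin d), w t j = (1 - η) ^ (S (t:ℕ) j) := by
    intro t j
    rw [hw]
    congr 1
  have hwpos : ∀ (t : Fin T) (j : Fin d), 0 < w t j := by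
    intro t j; rw [hwS]; exact Real.rpow_pos_of_pos h1 _
  have hWpos : ∀ t : Fin T, 0 < ∑ j, w t j :=
    fun t => Finset.sum_pos (fun j _ => hwpos t j) ⟨f, Finset.mem_univ f⟩
  have hΦW : ∀ t : Fin T, Φ (t:ℕ) = ∑ j, w t j := by
    intro t; simp only [hΦdef]; exact Finset.sum_congr rfl fun j _ => (hwS t j).symm
  -- step inequality
  have hstep : ∀ k (hk : k < T), Φ (k+1) ≤ Φ k * Real.exp (-η * q ⟨k, hk⟩) := by
    intro k hk
    set t : Fin T := ⟨k, hk⟩ with ht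
    have hfil : Finset.univ.filter (fun s : Fin T => (s:ℕ) < k+1)
        = insert t (Finset.univ.filter (fun s : Fin T => (s:ℕ) < k)) := by
      ext s
      simp only [Finset.mem_filter, Finset.mem_univ, true_and, Finset.mem_insert]
      constructor
      · intro hs
        rcases Nat.lt_succ_iff_lt_or_eq.mp hs with h | h
        · exact Or.inr h
        · exact Or.inl (Fin.ext h)
      · rintro (rfl | h)
        · exact Nat.lt_succ_self _
        · exact Nat.lt_succ_of_lt h
    have hSsucc : ∀ j, S (k+1) j = S k j + ℓ t j := by
      intro j
      simp only [hSdef, hfil]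
      rw [Finset.sum_insert (by simp; exact le_rfl)]
      ring
    have hq1 : ∀ j, 0 ≤ ℓ t j := fun j => (hℓ t j).1
    have hq2 : ∀ j, ℓ t j ≤ 1 := fun j => (hℓ t j).2
    have hΦ1 : Φ (k+1) ≤ (∑ j, w t j) * (1 - η * q t) := by
      have : Φ (k+1) ≤ ∑ j, w t j * (1 - η * ℓ t j) := by
        apply Finset.sum_le_sum
        intro j _
        have hwk : w t j = (1 - η) ^ (S k j) := hwS t j
        rw [hSsucc j, Real.rpow_add h1, hwk]
        have hc := chord_rpow (1-η) (ℓ t j) h1 (hq1 j) (hq2 j)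
        have : (1:ℝ) - (1 - (1-η)) * ℓ t j = 1 - η * ℓ t j := by ring
        rw [this] at hc
        exact mul_le_mul_of_nonneg_left hc (le_of_lt (Real.rpow_pos_of_pos h1 _))
      refine this.trans (le_of_eq ?_)
      have hWne : (∑ j, w t j) ≠ 0 := ne_of_gt (hWpos t)
      have hqW : (∑ j, w t j) * q t = ∑ j, w t j * ℓ t j := by
        simp only [hqdef]
        rw [Finset.mul_sum]
        refine Finset.sum_congr rfl fun j _ => ?_
        rw [hp]
        field_simp
      calc ∑ j, w t j * (1 - η * ℓ t j)
          = (∑ j, w t j) - η * ∑ j, w t j * ℓ t j := by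
            rw [Finset.mul_sum, ← Finset.sum_sub_distrib]
            refine Finset.sum_congr rfl fun j _ => by ring
        _ = (∑ j, w t j) * (1 - η * q t) := by rw [← hqW]; ring
    have hΦ2 : (∑ j, w t j) * (1 - η * q t) ≤ (∑ j, w t j) * Real.exp (-η * q t) := by
      apply mul_le_mul_of_nonneg_left _ (le_of_lt (hWpos t))
      have := Real.add_one_le_exp (-η * q t)
      linarith
    have hΦk : Φ k = ∑ j, w t j := hΦW t
    rw [hΦk]
    exact hΦ1.trans hΦ2
  -- induction
  have key : ∀ k, k ≤ T → Φ k ≤ d * Real.exp (-η * Q k) := by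
    intro k
    induction k with
    | zero =>
      intro _
      have : Φ 0 = d := by
        simp only [hΦdef, hSdef]
        have : ∀ j : Fin d, (∑ s ∈ Finset.univ.filter (fun s : Fin T => (s:ℕ) < 0), ℓ s j) = 0 := by
          intro j; simp
        simp [this, Real.rpow_zero]
      have hQ0 : Q 0 = 0 := by simp [hQdef]
      rw [this, hQ0]
      simp
    | succ n ih =>
      intro h
      have hn : n < T := h
      set t : Fin T := ⟨n, hn⟩ with ht
      have hQsucc : Q (n+1) = Q n + q t := by
        simp only [hQdef]
        have hfil : Finset.univ.filter (fun s : Fin T => (s:ℕ) < n+1)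
            = insert t (Finset.univ.filter (fun s : Fin T => (s:ℕ) < n)) := by
          ext s
          simp only [Finset.mem_filter, Finset.mem_univ, true_and, Finset.mem_insert]
          constructor
          · intro hs
            rcases Nat.lt_succ_iff_lt_or_eq.mp hs with h | h
            · exact Or.inr h
            · exact Or.inl (Fin.ext h)
          · rintro (rfl | h)
            · exact Nat.lt_succ_self _
            · exact Nat.lt_succ_of_lt h
        rw [hfil, Finset.sum_insert (by simp; exact le_rfl)]
        ring
      calc Φ (n+1) ≤ Φ n * Real.exp (-η * q t) := hstep n hn
        _ ≤ (d * Real.exp (-η * Q n)) * Real.exp (-η * q t) := by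
            apply mul_le_mul_of_nonneg_right (ih (le_of_lt hn)) (Real.exp_nonneg _)
        _ = d * Real.exp (-η * Q (n+1)) := by
            rw [hQsucc, mul_assoc, ← Real.exp_add]
            ring_nf
  have hfinal := key T le_rfl
  have hfilT : Finset.univ.filter (fun s : Fin T => (s:ℕ) < T) = Finset.univ := by
    ext s; simp [s.isLt]
  set A : ℝ := ∑ t, ℓ t f with hA
  set Lhat : ℝ := ∑ t, q t with hL
  have hQT : Q T = Lhat := by simp only [hQdef, hfilT, hL]
  have hST : S T f = A := by simp only [hSdef, hfilT, hA]
  have hlow : (1-η) ^ A ≤ Φ T := by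
    rw [← hST]
    exact Finset.single_le_sum (fun j _ => le_of_lt (Real.rpow_pos_of_pos h1 _)) (Finset.mem_univ f)
  rw [hQT] at hfinal
  have hdpos : (0:ℝ) < d := by exact_mod_cast hd
  have hlog := Real.log_le_log (Real.rpow_pos_of_pos h1 A) (hlow.trans hfinal)
  rw [Real.log_rpow h1, Real.log_mul (ne_of_gt hdpos) (Real.exp_ne_zero _), Real.log_exp] at hlog
  have hA0 : 0 ≤ A := Finset.sum_nonneg fun t _ => (hℓ t f).1
  have hnl : -Real.log (1-η) ≤ η + η^2 := neg_log_one_sub_le η hη hη2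
  have hmain : η * Lhat ≤ Real.log d + A * (η + η^2) := by
    nlinarith [mul_le_mul_of_nonneg_left hnl hA0]
  have hgoal : Lhat ≤ (1 + η) * A + Real.log d / η := by
    rw [← sub_nonneg]
    have : (1 + η) * A + Real.log d / η - Lhat = (η * ((1+η)*A) + Real.log d - η * Lhat) / η := by
      field_simp
    rw [this]
    apply div_nonneg _ (le_of_lt hη)
    nlinarith
  exact hgoal
end

section
/- Let d ≥ 1 be a natural number, T a natural number, and ℓ : Fin T → Fin d → [0,1] a loss sequence. Define weights w_f^t = (1−η)^(∑_{s<t} ℓ_s(f)) and probabilities p_f^t = w_f^t / ∑_j w_j^t, with 0 < η < 1/2. Let L* = min_f ∑_t ℓ_t(f) be the loss of the best expert in hindsight. Then the algorithm's total expected loss L̂ = ∑_t ∑_j p_j^t ℓ_t(j) satisfies L̂ ≥ (1 − 4η)·L*. -/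
theorem stmt7 (d T : ℕ) (hd : 1 ≤ d) (η : ℝ) (hη : 0 < η) (hη2 : η < 1/2)
    (ℓ : Fin T → Fin d → ℝ) (hℓ : ∀ t f, ℓ t f ∈ Set.Icc (0 : ℝ) 1)
    (w : Fin T → Fin d → ℝ)
    (hw : ∀ t f, w t f = (1 - η) ^ (∑ s ∈ Finset.univ.filter (fun s => s < t), ℓ s f))
    (p : Fin T → Fin d → ℝ) (hp : ∀ t f, p t f = w t f / ∑ j, w t j) :
    ∑ t, ∑ j, p t j * ℓ t j ≥
      (1 - 4 * η) *
        (Finset.univ.inf' (Finset.univ_nonempty_iff.mpr ⟨⟨0, hd⟩⟩)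
          fun f => ∑ t, ℓ t f) := by
  have hb0 : (0:ℝ) < 1 - η := by linarith
  have hb1 : (1:ℝ) - η < 1 := by linarith
  set c : ℝ := -Real.log (1 - η) with hcdef
  have hc0 : 0 < c := by
    have := Real.log_neg hb0 hb1
    rw [hcdef]; linarith
  have hcle : c ≤ 2 * η := by
    have h := Real.log_le_sub_one_of_pos (show (0:ℝ) < (1-η)⁻¹ by positivity)
    rw [Real.log_inv] at h
    have h2 : (1-η)⁻¹ - 1 ≤ 2 * η := by
      rw [sub_le_iff_le_add, inv_le_iff_one_le_mul₀ hb0]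
      nlinarith
    rw [hcdef]; linarith
  have hc1 : c < 1 := by linarith
  have ha0 : (0:ℝ) < 1 - c := by linarith
  -- partial sums of losses and the potential function
  set P : ℕ → Fin d → ℝ :=
    fun n f => ∑ s ∈ Finset.univ.filter (fun s : Fin T => (s:ℕ) < n), ℓ s f with hP
  set W : ℕ → ℝ := fun n => ∑ f, (1-η) ^ (P n f) with hWdef
  set lhat : Fin T → ℝ := fun t => ∑ j, p t j * ℓ t j with hlh
  set Lh : ℕ → ℝ :=
    fun n => ∑ t ∈ Finset.univ.filter (fun t : Fin T => (t:ℕ) < n), lhat t with hLh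
  have hwP : ∀ (t : Fin T) (f : Fin d), w t f = (1 - η) ^ (P (t:ℕ) f) := by
    intro t f
    rw [hw, hP]
    simp only
    congr 1
  have hWpos : ∀ n, 0 < W n := by
    intro n
    rw [hWdef]
    apply Finset.sum_pos
    · intro f _; exact Real.rpow_pos_of_pos hb0 _
    · exact Finset.univ_nonempty_iff.mpr ⟨⟨0, hd⟩⟩
  have hwpos : ∀ t f, 0 < w t f := by
    intro t f; rw [hwP]; exact Real.rpow_pos_of_pos hb0 _
  have hppos : ∀ t f, 0 ≤ p t f := by
    intro t f; rw [hp]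
    apply div_nonneg (hwpos t f).le
    exact Finset.sum_nonneg fun j _ => (hwpos t j).le
  have hpsum : ∀ t, ∑ j, p t j = 1 := by
    intro t
    have hpos : 0 < ∑ j, w t j :=
      Finset.sum_pos (fun j _ => hwpos t j) (Finset.univ_nonempty_iff.mpr ⟨⟨0, hd⟩⟩)
    rw [Finset.sum_congr rfl fun j _ => hp t j, ← Finset.sum_div, div_self hpos.ne']
  have hlh01 : ∀ t, lhat t ∈ Set.Icc (0:ℝ) 1 := by
    intro t
    constructor
    · apply Finset.sum_nonneg
      intro j _
      exact mul_nonneg (hppos t j) (hℓ t j).1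
    · calc ∑ j, p t j * ℓ t j ≤ ∑ j, p t j := by
            apply Finset.sum_le_sum
            intro j _
            nth_rewrite 2 [← mul_one (p t j)]
            exact mul_le_mul_of_nonneg_left (hℓ t j).2 (hppos t j)
        _ = 1 := hpsum t
  -- key induction
  have key : ∀ n, n ≤ T → (d:ℝ) * (1 - c) ^ (Lh n) ≤ W n := by
    intro n
    induction n with
    | zero =>
      intro _
      have h1 : Lh 0 = 0 := by
        rw [hLh]; simp
      have h2 : W 0 = d := by
        rw [hWdef]
        have : ∀ f : Fin d, P 0 f = 0 := by
          intro f; rw [hP]; simp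
        simp [this]
      rw [h1, h2, Real.rpow_zero, mul_one]
    | succ n ih =>
      intro hn1
      have hn : n < T := hn1
      have ih' := ih (le_of_lt hn)
      set t : Fin T := ⟨n, hn⟩ with ht
      have hfilter : (Finset.univ.filter (fun s : Fin T => (s:ℕ) < n+1))
          = insert t (Finset.univ.filter (fun s : Fin T => (s:ℕ) < n)) := by
        ext s
        simp only [Finset.mem_filter, Finset.mem_insert, Finset.mem_univ, true_and, ht,
          Fin.ext_iff]
        omega
      have htnot : t ∉ Finset.univ.filter (fun s : Fin T => (s:ℕ) < n) := by simp [ht]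
      have hPsucc : ∀ f, P (n+1) f = P n f + ℓ t f := by
        intro f
        rw [hP]
        simp only
        rw [hfilter, Finset.sum_insert htnot]
        ring
      have hLhsucc : Lh (n+1) = Lh n + lhat t := by
        rw [hLh]
        simp only
        rw [hfilter, Finset.sum_insert htnot]
        ring
      -- pointwise: (1-η)^x ≥ 1 - c x
      have hpt : ∀ f, 1 - c * ℓ t f ≤ (1-η) ^ (ℓ t f) := by
        intro f
        rw [Real.rpow_def_of_pos hb0]
        have h := Real.add_one_le_exp (Real.log (1-η) * ℓ t f)
        have heq : 1 - c * ℓ t f = Real.log (1-η) * ℓ t f + 1 := by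
          rw [hcdef]; ring
        linarith
      have hWlhat : W n * lhat t = ∑ f, (1-η) ^ (P n f) * ℓ t f := by
        have hWt : ∑ j, w t j = W n := by
          rw [hWdef]
          exact Finset.sum_congr rfl fun j _ => (hwP t j)
        have hlform : lhat t = (∑ f, (1-η) ^ (P n f) * ℓ t f) / W n := by
          rw [hlh]
          simp only
          rw [Finset.sum_div]
          apply Finset.sum_congr rfl
          intro j _
          rw [hp, hwP, hWt]
          ring
        rw [hlform, mul_div_cancel₀ _ (hWpos n).ne']
      have hstep1 : W n * (1 - c * lhat t) ≤ W (n+1) := by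
        have hWn1 : W (n+1) = ∑ f, (1-η) ^ (P n f) * (1-η) ^ (ℓ t f) := by
          rw [hWdef]
          apply Finset.sum_congr rfl
          intro f _
          rw [hPsucc f, Real.rpow_add hb0]
        rw [hWn1]
        have : W n * (1 - c * lhat t) = ∑ f, (1-η) ^ (P n f) * (1 - c * ℓ t f) := by
          have : ∑ f, (1-η) ^ (P n f) * (1 - c * ℓ t f)
              = W n - c * (W n * lhat t) := by
            rw [hWlhat, hWdef]
            rw [Finset.mul_sum, ← Finset.sum_sub_distrib]
            apply Finset.sum_congr rfl
            intro f _
            ring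
          rw [this]; ring
        rw [this]
        apply Finset.sum_le_sum
        intro f _
        exact mul_le_mul_of_nonneg_left (hpt f) (Real.rpow_pos_of_pos hb0 _).le
      have hbern : (1 - c) ^ (lhat t) ≤ 1 - c * lhat t := by
        have h := rpow_one_add_le_one_add_mul_self (s := -c) (by linarith)
          (hlh01 t).1 (hlh01 t).2
        have h1 : (1 + -c : ℝ) = 1 - c := by ring
        rw [h1] at h
        linarith [h]
      calc (d:ℝ) * (1 - c) ^ (Lh (n+1))
          = ((d:ℝ) * (1 - c) ^ (Lh n)) * (1 - c) ^ (lhat t) := by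
            rw [hLhsucc, Real.rpow_add ha0]; ring
        _ ≤ W n * (1 - c) ^ (lhat t) :=
            mul_le_mul_of_nonneg_right ih' (Real.rpow_pos_of_pos ha0 _).le
        _ ≤ W n * (1 - c * lhat t) :=
            mul_le_mul_of_nonneg_left hbern (hWpos n).le
        _ ≤ W (n+1) := hstep1
  -- evaluate at T
  have hfT : (Finset.univ.filter (fun s : Fin T => (s:ℕ) < T)) = Finset.univ := by
    apply Finset.filter_true_of_mem
    intro s _
    exact s.isLt
  set Lstar : ℝ := Finset.univ.inf' (Finset.univ_nonempty_iff.mpr ⟨⟨0, hd⟩⟩)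
      (fun f => ∑ t, ℓ t f) with hLs
  have hLs0 : 0 ≤ Lstar := by
    rw [hLs]
    apply Finset.le_inf'
    intro f _
    exact Finset.sum_nonneg fun t _ => (hℓ t f).1
  have hWT : W T ≤ (d:ℝ) * (1-η) ^ Lstar := by
    have hterm : ∀ f : Fin d, (1-η) ^ (P T f) ≤ (1-η) ^ Lstar := by
      intro f
      apply Real.rpow_le_rpow_of_exponent_ge hb0 (by linarith)
      have hPT : P T f = ∑ t, ℓ t f := by
        rw [hP]; simp only; rw [hfT]
      rw [hPT, hLs]
      exact Finset.inf'_le _ (Finset.mem_univ f)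
    calc W T ≤ ∑ _f : Fin d, (1-η) ^ Lstar := by
          rw [hWdef]; exact Finset.sum_le_sum fun f _ => hterm f
      _ = (d:ℝ) * (1-η) ^ Lstar := by
          rw [Finset.sum_const, Finset.card_univ, Fintype.card_fin, nsmul_eq_mul]
  have hLhT : Lh T = ∑ t, lhat t := by
    rw [hLh]; simp only; rw [hfT]
  set Lhat : ℝ := ∑ t, lhat t with hLhat
  have hLhat0 : 0 ≤ Lhat := Finset.sum_nonneg fun t _ => (hlh01 t).1
  have hdpos : (0:ℝ) < d := by exact_mod_cast hd
  have hmain : (1 - c) ^ Lhat ≤ (1-η) ^ Lstar := by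
    have h1 := key T le_rfl
    rw [hLhT] at h1
    have h2 : (d:ℝ) * (1 - c) ^ Lhat ≤ (d:ℝ) * (1-η) ^ Lstar := le_trans h1 hWT
    exact le_of_mul_le_mul_left h2 hdpos
  -- take logs
  have hlog : Lhat * Real.log (1-c) ≤ Lstar * Real.log (1-η) := by
    rw [← Real.log_rpow ha0, ← Real.log_rpow hb0]
    exact Real.log_le_log (Real.rpow_pos_of_pos ha0 _) hmain
  set c' : ℝ := -Real.log (1-c) with hc'def
  have hc'0 : 0 < c' := by
    have := Real.log_neg ha0 (by linarith)
    rw [hc'def]; linarith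
  have hc'le : c' * (1 - c) ≤ c := by
    have h := Real.log_le_sub_one_of_pos (show (0:ℝ) < (1-c)⁻¹ by positivity)
    rw [Real.log_inv] at h
    have h2 : -Real.log (1-c) ≤ (1-c)⁻¹ - 1 := h
    have h3 : ((1-c)⁻¹ - 1) * (1 - c) = c := by field_simp; ring
    calc c' * (1-c) ≤ ((1-c)⁻¹ - 1) * (1-c) :=
          mul_le_mul_of_nonneg_right h2 ha0.le
      _ = c := h3
  -- from hlog : c * Lstar ≤ Lhat * c'
  have hkey2 : c * Lstar ≤ Lhat * c' := by
    have h1 : Real.log (1-η) = -c := by rw [hcdef]; ring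
    have h2 : Real.log (1-c) = -c' := by rw [hc'def]; ring
    rw [h1, h2] at hlog
    linarith
  have hfinal : (1 - c) * Lstar ≤ Lhat := by
    have h1 : c * Lstar * (1 - c) ≤ Lhat * c' * (1 - c) :=
      mul_le_mul_of_nonneg_right hkey2 ha0.le
    have h2 : Lhat * c' * (1 - c) = Lhat * (c' * (1-c)) := by ring
    have h3 : Lhat * (c' * (1-c)) ≤ Lhat * c :=
      mul_le_mul_of_nonneg_left hc'le hLhat0
    have h4 : c * Lstar * (1-c) ≤ Lhat * c := by linarith
    nlinarith
  show Lhat ≥ (1 - 4*η) * Lstar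
  nlinarith
end

section
/- Let α > 0 and 0 < η ≤ α/6, let d ≥ 1, and let T₀ = 6·ln(d)/(η·α). Suppose for two groups g and g*: (i) n_g, n_{g*} ≥ T₀ are the (real, positive) numbers of examples in each group; (ii) there exist real numbers L_g, L_{g*} ≥ 0 (best-expert cumulative losses) with L_g/n_g = L_{g*}/n_{g*} (fairness in isolation) and L_{g*} ≤ n_{g*}; (iii) the algorithm losses satisfy L̂_g ≤ (1+η)·L_g + ln(d)/η and L̂_{g*} ≥ (1−4η)·L_{g*}. Then L̂_g/n_g − L̂_{g*}/n_{g*} ≤ α. -/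
theorem stmt8 (α η : ℝ) (d : ℕ) (hα : 0 < α) (hη : 0 < η) (hη2 : η ≤ α / 6) (hd : 1 ≤ d)
    (T₀ ng ngs Lg Lgs Lhatg Lhatgs : ℝ)
    (hT₀ : T₀ = 6 * Real.log d / (η * α))
    (hngpos : 0 < ng) (hngspos : 0 < ngs)
    (hng : T₀ ≤ ng) (hngs : T₀ ≤ ngs)
    (hLg : 0 ≤ Lg) (hLgs : 0 ≤ Lgs)
    (hfair : Lg / ng = Lgs / ngs) (hbd : Lgs ≤ ngs)
    (h1 : Lhatg ≤ (1 + η) * Lg + Real.log d / η)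
    (h2 : Lhatgs ≥ (1 - 4 * η) * Lgs) :
    Lhatg / ng - Lhatgs / ngs ≤ α := by
  have hlogd : 0 ≤ Real.log d := Real.log_nonneg (by exact_mod_cast hd)
  have hkey : Real.log d / (η * ng) ≤ α / 6 := by
    rcases eq_or_lt_of_le hlogd with h0 | h0
    · rw [← h0, zero_div]; positivity
    · have hT0pos : 0 < T₀ := by
        rw [hT₀]; positivity
      have h1' : Real.log d / (η * ng) ≤ Real.log d / (η * T₀) := by
        apply div_le_div_of_nonneg_left hlogd (by positivity)
        exact mul_le_mul_of_nonneg_left hng hη.le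
      have h2' : Real.log d / (η * T₀) = α / 6 := by
        rw [hT₀]; field_simp
      linarith
  have hL1 : Lgs / ngs ≤ 1 := (div_le_one hngspos).mpr hbd
  have hL0 : 0 ≤ Lgs / ngs := div_nonneg hLgs hngspos.le
  have ha : Lhatg / ng ≤ (1 + η) * (Lg / ng) + Real.log d / (η * ng) := by
    calc Lhatg / ng ≤ ((1 + η) * Lg + Real.log d / η) / ng := by gcongr
      _ = (1 + η) * (Lg / ng) + Real.log d / (η * ng) := by field_simp
  have hb : (1 - 4 * η) * (Lgs / ngs) ≤ Lhatgs / ngs := by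
    rw [mul_div_assoc']
    gcongr
  rw [hfair] at ha
  nlinarith [hL0, hL1, hkey, ha, hb]
end
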